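/- Let ⟨A, →⟩ be a conditional algebra. For a ∈ A and an ultrafilter u of A set Q_a(u) := {v ∈ Ul(A) : {b ∈ A : a → b ∈ u} ⊆ v}, and for S ⊆ Ul(A) set [Q_a](S) := {u ∈ Ul(A) : Q_a(u) ⊆ S}. Then for every a ∈ A and every S ⊆ Ul(A), [Q_a](S) = φ(a) →_{T_A} S. -/
import Mathlib


/-- A filter of a Boolean algebra: contains `⊤`, upward closed, closed under binary meets. -/
def IsBFilter {A : Type*} [BooleanAlgebra A] (F : Set A) : Prop :=
  ⊤ ∈ F ∧ (∀ a b : A, a ∈ F → a ≤ b → b ∈ F) ∧ (∀ a b : A, a ∈ F → b ∈ F → a ⊓ b ∈ F)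

/-- An ultrafilter: a maximal proper filter. -/
def IsBUltra {A : Type*} [BooleanAlgebra A] (u : Set A) : Prop :=
  IsBFilter u ∧ u ≠ Set.univ ∧
    ∀ F : Set A, IsBFilter F → F ≠ Set.univ → u ⊆ F → F = u

/-- The set (type) of ultrafilters of `A`. -/
abbrev Ult (A : Type*) [BooleanAlgebra A] := {u : Set A // IsBUltra u}

/-- `D_X(Y) = {b | ∃ a ∈ Y, a → b ∈ X}`. -/
def Dset {A : Type*} [BooleanAlgebra A] (c : A → A → A) (X Y : Set A) : Set A :=
  {b : A | ∃ a ∈ Y, c a b ∈ X}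

/-- The Stone map `φ(a) = {u ∈ Ul(A) : a ∈ u}`. -/
def phi {A : Type*} [BooleanAlgebra A] (a : A) : Set (Ult A) := {u : Ult A | a ∈ u.1}

/-- The hybrid ternary relation `T_A` on the ultrafilter frame:
`T_A(u, Z, v)` iff `Z = φ(F)` and `D_u(F) ⊆ v` for some filter `F`. -/
def TRel {A : Type*} [BooleanAlgebra A] (c : A → A → A)
    (u : Ult A) (Z : Set (Ult A)) (v : Ult A) : Prop :=
  ∃ F : Set A, IsBFilter F ∧ Z = {w : Ult A | F ⊆ w.1} ∧ Dset c u.1 F ⊆ v.1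

/-- The π-extension: `U →_{T_A} V = {u : ∀ Z ⊆ U, T_A(u, Z) ⊆ V}`. -/
def condT {A : Type*} [BooleanAlgebra A] (c : A → A → A) (U V : Set (Ult A)) : Set (Ult A) :=
  {u : Ult A | ∀ Z ⊆ U, ∀ v : Ult A, TRel c u Z v → v ∈ V}

/-- `Q_a(u) = {v : {b : a → b ∈ u} ⊆ v}`. -/
def Qrel {A : Type*} [BooleanAlgebra A] (c : A → A → A) (a : A) (u : Ult A) :
    Set (Ult A) :=
  {v : Ult A | {b : A | c a b ∈ u.1} ⊆ v.1}

/-- `[Q_a](S) = {u : Q_a(u) ⊆ S}`. -/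
def boxQ {A : Type*} [BooleanAlgebra A] (c : A → A → A) (a : A) (S : Set (Ult A)) :
    Set (Ult A) :=
  {u : Ult A | Qrel c a u ⊆ S}

lemma eq_univ_of_bot_mem {A : Type*} [BooleanAlgebra A] {F : Set A}
    (hF : IsBFilter F) (h : (⊥:A) ∈ F) : F = Set.univ := by
  ext x; simp only [Set.mem_univ, iff_true]
  exact hF.2.1 ⊥ x h bot_le

lemma exists_ultra {A : Type*} [BooleanAlgebra A] {F : Set A}
    (hF : IsBFilter F) (hne : F ≠ Set.univ) :
    ∃ u : Set A, IsBUltra u ∧ F ⊆ u := by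
  have H : ∀ C ⊆ {G : Set A | IsBFilter G ∧ G ≠ Set.univ},
      IsChain (· ⊆ ·) C → C.Nonempty →
      ∃ ub ∈ {G : Set A | IsBFilter G ∧ G ≠ Set.univ}, ∀ s ∈ C, s ⊆ ub := by
    intro C hCS hC hCne
    refine ⟨⋃₀ C, ⟨⟨?_, ?_, ?_⟩, ?_⟩, fun s hs => Set.subset_sUnion_of_mem hs⟩
    · obtain ⟨s, hs⟩ := hCne
      exact Set.mem_sUnion.2 ⟨s, hs, (hCS hs).1.1⟩
    · rintro a b ⟨s, hs, has⟩ hab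
      exact ⟨s, hs, (hCS hs).1.2.1 a b has hab⟩
    · rintro a b ⟨s, hs, has⟩ ⟨t, ht, hbt⟩
      rcases hC.total hs ht with h | h
      · exact ⟨t, ht, (hCS ht).1.2.2 a b (h has) hbt⟩
      · exact ⟨s, hs, (hCS hs).1.2.2 a b has (h hbt)⟩
    · intro h
      have : (⊥:A) ∈ ⋃₀ C := h ▸ Set.mem_univ _
      obtain ⟨s, hs, hbs⟩ := this
      exact (hCS hs).2 (eq_univ_of_bot_mem (hCS hs).1 hbs)
  obtain ⟨m, hFm, hm⟩ := zorn_subset_nonempty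
    {G : Set A | IsBFilter G ∧ G ≠ Set.univ} H F ⟨hF, hne⟩
  refine ⟨m, ⟨hm.prop.1, hm.prop.2, ?_⟩, hFm⟩
  intro G hG hGne hmG
  exact (hm.le_of_ge ⟨hG, hGne⟩ hmG).antisymm hmG

lemma mem_of_all_ultra {A : Type*} [BooleanAlgebra A] {F : Set A}
    (hF : IsBFilter F) (hne : F ≠ Set.univ) (a : A)
    (h : ∀ u : Set A, IsBUltra u → F ⊆ u → a ∈ u) : a ∈ F := by
  by_contra ha
  set G : Set A := {x : A | ∃ f ∈ F, f ⊓ aᶜ ≤ x} with hGdef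
  have hGF : IsBFilter G := by
    refine ⟨⟨⊤, hF.1, le_top⟩, ?_, ?_⟩
    · rintro x y ⟨f, hf, hfx⟩ hxy
      exact ⟨f, hf, hfx.trans hxy⟩
    · rintro x y ⟨f, hf, hfx⟩ ⟨g, hg, hgy⟩
      refine ⟨f ⊓ g, hF.2.2 f g hf hg, ?_⟩
      calc f ⊓ g ⊓ aᶜ ≤ (f ⊓ aᶜ) ⊓ (g ⊓ aᶜ) := by
            refine le_inf (le_inf ?_ ?_) (le_inf ?_ ?_) <;>
              simp [inf_assoc, inf_le_right, inf_le_left,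
                inf_le_of_left_le, inf_le_of_right_le]
        _ ≤ x ⊓ y := inf_le_inf hfx hgy
  have hGne : G ≠ Set.univ := by
    intro hu
    have hb : (⊥:A) ∈ G := hu ▸ Set.mem_univ _
    obtain ⟨f, hf, hfb⟩ := hb
    have : f ⊓ aᶜ = ⊥ := le_bot_iff.mp hfb
    have hfa : f ≤ a := by
      have h2 : f \ a = ⊥ := by rw [sdiff_eq]; exact this
      exact sdiff_eq_bot_iff.mp h2
    exact ha (hF.2.1 f a hf hfa)
  obtain ⟨u, hu, hGu⟩ := exists_ultra hGF hGne
  have hFu : F ⊆ u := fun f hf => hGu ⟨f, hf, inf_le_left⟩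
  have hau : a ∈ u := h u hu hFu
  have hacu : aᶜ ∈ u := hGu ⟨⊤, hF.1, by simp⟩
  have hbu : (⊥:A) ∈ u := by
    have := hu.1.2.2 a aᶜ hau hacu
    rwa [inf_compl_eq_bot] at this
  exact hu.2.1 (eq_univ_of_bot_mem hu.1 hbu)

/-- `[Q_a](S) = φ(a) →_{T_A} S` in every conditional algebra. -/
theorem statement10 {A : Type*} [BooleanAlgebra A] (c : A → A → A)
    (hC1 : ∀ a : A, c a ⊤ = ⊤)
    (hC2 : ∀ a b d : A, c a b ⊓ c a d = c a (b ⊓ d))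
    (hC3 : ∀ a b d : A, c (a ⊔ b) d ≤ c a d ⊓ c b d) :
    ∀ (a : A) (S : Set (Ult A)), boxQ c a S = condT c (phi a) S := by
  intro a S
  ext u
  constructor
  · -- boxQ ⊆ condT
    intro hu Z hZ v hTv
    obtain ⟨F, hF, hZF, hD⟩ := hTv
    have haF : a ∈ F := by
      by_cases hprop : F = Set.univ
      · exact hprop ▸ Set.mem_univ a
      · refine mem_of_all_ultra hF hprop a ?_
        intro w hw hFw
        exact hZ (show (⟨w, hw⟩ : Ult A) ∈ Z from hZF ▸ hFw)
    refine hu ?_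
    intro b hb
    exact hD ⟨a, haF, hb⟩
  · -- condT ⊆ boxQ
    intro hu v hv
    have hFp : IsBFilter {x : A | a ≤ x} :=
      ⟨le_top, fun x y hx hxy => hx.trans hxy, fun x y hx hy => le_inf hx hy⟩
    refine hu (phi a) (fun w hw => hw) v ⟨{x : A | a ≤ x}, hFp, ?_, ?_⟩
    · ext w
      constructor
      · intro haw x hx
        exact w.2.1.2.1 a x haw hx
      · intro hw
        exact hw (le_refl a)
    · rintro b ⟨a', ha', hab⟩
      refine hv ?_
      have : c a' b ≤ c a b := by
        have h3 := hC3 a a' b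
        rw [sup_eq_right.mpr ha'] at h3
        exact h3.trans inf_le_left
      exact u.2.1.2.1 (c a' b) (c a b) hab this
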